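/- arXiv:2002.09861 — 2 statements merged into one kernel-verified Lean document; each statement's English description precedes it below -/
import Mathlib

section
/- Let X ⊂ P^4 be the cubic threefold defined by f(x_0,...,x_3) + l(x_0,...,x_3)x_4^2 = 0 and let τ be the involution [x_0,...,x_3,x_4] ↦ [x_0,...,x_3,−x_4]. If ℓ ⊂ X is a line preserved by τ, then either ℓ is contained in the cubic surface S = (f = x_4 = 0), or ℓ passes through the point p = [0,0,0,0,1] and is contained in the cone X ∩ T_pX over the curve E = (f = l = x_4 = 0). -/
open MvPolynomial

/-! A line preserved by `τ` either lies in the fixed hyperplane `x₄ = 0`, where `F` restricts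
to `f`, or contains a point with `x₄ ≠ 0`; in the latter case the difference of that point
and its image under `τ` is a nonzero multiple of `p`, so `p ∈ ℓ`. Then `ℓ` contains the whole
line `x + t p` through each of its points `x`; writing `x' = (x₀, …, x₃)`, the polynomial
`F(x + t p) = f(x') + l(x') (x₄ + t)²` in `t` vanishes identically, which forces
`f(x') = l(x') = 0`. -/

lemma eval_rename_castSucc_add_mul_X_last_sq {R : Type*} [CommRing R] {n : ℕ}
    (f l : MvPolynomial (Fin n) R) (x : Fin (n + 1) → R) :
    eval x (rename Fin.castSucc f + rename Fin.castSucc l * X (Fin.last n) ^ 2)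
      = eval (x ∘ Fin.castSucc) f + eval (x ∘ Fin.castSucc) l * x (Fin.last n) ^ 2 := by
  simp [eval_rename]

lemma single_mem_of_forall_reflect_mem {K ι : Type*} [Field K] [NeZero (2 : K)]
    [DecidableEq ι] {ℓ : Submodule K (ι → K)} {i : ι}
    (hinv : ∀ x ∈ ℓ, (fun j => if j = i then -x j else x j) ∈ ℓ)
    {x : ι → K} (hx : x ∈ ℓ) (hxi : x i ≠ 0) :
    Pi.single i 1 ∈ ℓ := by
  have hdiff : x - (fun j => if j = i then -x j else x j) = (2 * x i) • Pi.single i 1 := by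
    funext j
    by_cases hj : j = i
    · subst hj; simp [two_mul]
    · simp [hj]
  have h2xi : (2 * x i) ≠ 0 := mul_ne_zero two_ne_zero hxi
  have hmem := ℓ.smul_mem (2 * x i)⁻¹ (ℓ.sub_mem hx (hinv x hx))
  rwa [hdiff, smul_smul, inv_mul_cancel₀ h2xi, one_smul] at hmem

lemma eq_zero_and_eq_zero_of_forall_add_mul_add_sq_eq_zero {R : Type*} [CommRing R]
    {a b c : R} (h : ∀ t, a + b * (c + t) ^ 2 = 0) : a = 0 ∧ b = 0 := by
  have ha : a = 0 := by simpa using h (-c)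
  refine ⟨ha, ?_⟩
  simpa [ha] using h (1 - c)

lemma eval_castSucc_eq_zero_of_forall_add_smul_single_last {R : Type*} [CommRing R] {n : ℕ}
    {f l : MvPolynomial (Fin n) R} {x : Fin (n + 1) → R}
    (h : ∀ t : R, eval (x + t • Pi.single (Fin.last n) 1)
      (rename Fin.castSucc f + rename Fin.castSucc l * X (Fin.last n) ^ 2) = 0) :
    eval (x ∘ Fin.castSucc) f = 0 ∧ eval (x ∘ Fin.castSucc) l = 0 := by
  refine eq_zero_and_eq_zero_of_forall_add_mul_add_sq_eq_zero (c := x (Fin.last n)) fun t => ?_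
  have hcomp : (x + t • Pi.single (Fin.last n) 1) ∘ Fin.castSucc = x ∘ Fin.castSucc := by
    funext j
    simp [(Fin.castSucc_lt_last j).ne]
  simpa [eval_rename_castSucc_add_mul_X_last_sq, hcomp] using h t

theorem stmt1_general
    (f l : MvPolynomial (Fin 4) ℂ)
    (F : MvPolynomial (Fin 5) ℂ)
    (hF : F = rename Fin.castSucc f + rename Fin.castSucc l * X 4 ^ 2)
    (τ : (Fin 5 → ℂ) → (Fin 5 → ℂ)) (hτ : τ = fun x i => if i = 4 then -x i else x i)
    (p : Fin 5 → ℂ) (hp : p = fun i => if i = 4 then 1 else 0)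
    (ℓ : Submodule ℂ (Fin 5 → ℂ))
    (hℓX : ∀ x ∈ ℓ, eval x F = 0)
    (hinv : ∀ x ∈ ℓ, τ x ∈ ℓ) :
    -- either ℓ lies on the cubic surface S = (f = x₄ = 0) ...
    (∀ x ∈ ℓ, x 4 = 0 ∧ eval (x ∘ Fin.castSucc) f = 0) ∨
    -- ... or ℓ passes through the Eckardt point p and lies in the cone X ∩ T_pX over E
    (p ∈ ℓ ∧ ∀ x ∈ ℓ, eval x F = 0 ∧ eval (x ∘ Fin.castSucc) l = 0) := by
  replace hF : F = rename Fin.castSucc f + rename Fin.castSucc l * X (Fin.last 4) ^ 2 := hF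
  subst hF hτ
  have hp_single : p = Pi.single (Fin.last 4) 1 := by
    subst hp; funext i; simp [Pi.single_apply]
  by_cases hhyperplane : ∀ x ∈ ℓ, x 4 = 0
  · refine Or.inl fun x hx => ⟨hhyperplane x hx, ?_⟩
    have hx0 := hℓX x hx
    rw [eval_rename_castSucc_add_mul_X_last_sq, show x (Fin.last 4) = 0 from hhyperplane x hx] at hx0
    simpa using hx0
  · push Not at hhyperplane
    obtain ⟨x₀, hx₀, hx₀4⟩ := hhyperplane
    have hpℓ : p ∈ ℓ := hp_single ▸ single_mem_of_forall_reflect_mem hinv hx₀ hx₀4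
    refine Or.inr ⟨hpℓ, fun x hx => ⟨hℓX x hx, ?_⟩⟩
    exact (eval_castSucc_eq_zero_of_forall_add_smul_single_last (f := f) fun t =>
      hℓX _ (ℓ.add_mem hx (ℓ.smul_mem t (hp_single ▸ hpℓ)))).2

/-- Let `X ⊂ ℙ⁴` be the cubic threefold `f(x₀,…,x₃) + l(x₀,…,x₃)x₄² = 0`
and `τ` the involution negating `x₄`.  A line `ℓ ⊂ X` (a 2-dimensional subspace of the
affine cone) preserved by `τ` is either contained in the cubic surface `S = (f = x₄ = 0)`,
or passes through the Eckardt point `p = [0,0,0,0,1]` and lies in the cone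
`X ∩ T_pX = (F = l = 0)` over the curve `E = (f = l = x₄ = 0)`. -/
theorem stmt1
    (f l : MvPolynomial (Fin 4) ℂ)
    (hf : f.IsHomogeneous 3) (hl : l.IsHomogeneous 1) (hl0 : l ≠ 0)
    (F : MvPolynomial (Fin 5) ℂ)
    (hF : F = rename Fin.castSucc f + rename Fin.castSucc l * X 4 ^ 2)
    (hsm : ∀ x : Fin 5 → ℂ, x ≠ 0 → eval x F = 0 → ∃ i, eval x (pderiv i F) ≠ 0)
    (τ : (Fin 5 → ℂ) → (Fin 5 → ℂ)) (hτ : τ = fun x i => if i = 4 then -x i else x i)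
    (p : Fin 5 → ℂ) (hp : p = fun i => if i = 4 then 1 else 0)
    (ℓ : Submodule ℂ (Fin 5 → ℂ)) (hdim : Module.finrank ℂ ℓ = 2)
    (hℓX : ∀ x ∈ ℓ, eval x F = 0)
    (hinv : ∀ x ∈ ℓ, τ x ∈ ℓ) :
    -- either ℓ lies on the cubic surface S = (f = x₄ = 0) ...
    (∀ x ∈ ℓ, x 4 = 0 ∧ eval (x ∘ Fin.castSucc) f = 0) ∨
    -- ... or ℓ passes through the Eckardt point p and lies in the cone X ∩ T_pX over E
    (p ∈ ℓ ∧ ∀ x ∈ ℓ, eval x F = 0 ∧ eval (x ∘ Fin.castSucc) l = 0) :=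
  stmt1_general f l F hF τ hτ p hp ℓ hℓX hinv
end

section
/- Let F = f(x_0,...,x_3) + l(x_0,...,x_3)x_4^2 define a smooth cubic threefold, with Jacobian ideal J_F = (∂F/∂x_0,...,∂F/∂x_4). Then the space of quadrics in J_F^2 not involving x_4, i.e. J_F^2 ∩ Sym²⟨x_0,x_1,x_2,x_3⟩, equals the set of quadrics Σ_{i=0}^{3} a_i (∂f/∂x_i + (∂l/∂x_i)x_4^2) with (a_0,...,a_3) ∈ ℂ^4 satisfying l(a_0,...,a_3) = 0; in particular this space has dimension 3 when the partials of F are linearly independent. -/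
/-!
Each `∂F/∂xᵢ` is a quadric, so a quadric in `J_F` is a combination `Σ cᵢ ∂F/∂xᵢ` with constant
coefficients. As a polynomial in `x₄` it reads `Σ_{i<4} cᵢ ∂f/∂xᵢ + 2c₄ l x₄ + l(c₀,…,c₃) x₄²`,
so differentiating twice in `x₄` shows that it is free of `x₄` exactly when `c₄ = 0` and
`l(c₀,…,c₃) = 0`. These coefficient vectors form the kernel of the nonzero functional `l` on `ℂ⁴`,
and the partials of `F` are independent, so the space has dimension `4 - 1 = 3`.
-/

open MvPolynomial

namespace MvPolynomial

section CommSemiring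

variable {R σ τ : Type*} [CommSemiring R]

noncomputable def jacobianIdeal (F : MvPolynomial σ R) : Ideal (MvPolynomial σ R) :=
  Ideal.span (Set.range fun i => pderiv i F)

lemma pderiv_rename_of_notMem_range {g : σ → τ} {j : τ} (hj : j ∉ Set.range g)
    (p : MvPolynomial σ R) : pderiv j (rename g p) = 0 := by
  classical
  refine pderiv_eq_zero_of_notMem_vars fun h => hj ?_
  obtain ⟨i, -, rfl⟩ := Finset.mem_image.mp (vars_rename g p h)
  exact ⟨i, rfl⟩

lemma homogeneousComponent_mul_of_isHomogeneous {n : ℕ} {g : MvPolynomial σ R}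
    (hg : g.IsHomogeneous n) (q : MvPolynomial σ R) :
    homogeneousComponent n (q * g) = C (coeff 0 q) * g := by
  classical
  induction q using MvPolynomial.induction_on' with
  | monomial s a =>
    rw [homogeneousComponent_of_mem ((isHomogeneous_monomial a rfl).mul hg), coeff_monomial]
    by_cases hs : s = 0
    · subst hs
      simp [monomial_zero']
    · have hd : Finsupp.degree s ≠ 0 := by rwa [Ne, Finsupp.degree_eq_zero_iff]
      rw [if_neg (by omega), if_neg hs, map_zero, zero_mul]
  | add p q hp hq => rw [add_mul, map_add, hp, hq, coeff_add, map_add, add_mul]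

lemma mem_span_of_mem_ideal_span_of_isHomogeneous {ι : Type*} [Fintype ι] {n : ℕ}
    {g : ι → MvPolynomial σ R} (hg : ∀ i, (g i).IsHomogeneous n) {p : MvPolynomial σ R}
    (hp : p ∈ Ideal.span (Set.range g)) (hpn : p.IsHomogeneous n) :
    p ∈ Submodule.span R (Set.range g) := by
  obtain ⟨c, rfl⟩ := Ideal.mem_span_range_iff_exists_fun.mp hp
  rw [← homogeneousComponent_eq_self hpn, map_sum]
  refine Submodule.sum_mem _ fun i _ => ?_
  rw [homogeneousComponent_mul_of_isHomogeneous (hg i), ← smul_eq_C_mul]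
  exact Submodule.smul_mem _ _ (Submodule.subset_span ⟨i, rfl⟩)

lemma IsHomogeneous.pderiv_eq_C_of_one {l : MvPolynomial σ R} (hl : l.IsHomogeneous 1) (i : σ) :
    pderiv i l = C (constantCoeff (pderiv i l)) :=
  totalDegree_eq_zero_iff_eq_C.mp ((totalDegree_zero_iff_isHomogeneous σ).mpr hl.pderiv)

variable [Fintype σ]

noncomputable def linearPart (l : MvPolynomial σ R) : Module.Dual R (σ → R) :=
  Fintype.linearCombination R fun i => constantCoeff (pderiv i l)

lemma IsHomogeneous.linearPart_apply {l : MvPolynomial σ R} (hl : l.IsHomogeneous 1)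
    (a : σ → R) : linearPart l a = eval a l := by
  conv_rhs => rw [← one_smul ℕ l, ← hl.sum_X_mul_pderiv]
  simp only [linearPart, Fintype.linearCombination_apply, map_sum, map_mul, eval_X, smul_eq_mul]
  refine Finset.sum_congr rfl fun i _ => ?_
  rw [hl.pderiv_eq_C_of_one i, eval_C, constantCoeff_C, mul_comm]

lemma IsHomogeneous.sum_smul_pderiv_of_one {l : MvPolynomial σ R} (hl : l.IsHomogeneous 1)
    (a : σ → R) : ∑ i, a i • pderiv i l = C (eval a l) := by
  rw [← hl.linearPart_apply, linearPart, Fintype.linearCombination_apply, map_sum]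
  refine Finset.sum_congr rfl fun i _ => ?_
  rw [hl.pderiv_eq_C_of_one i, smul_eq_C_mul, constantCoeff_C, smul_eq_mul, map_mul]

end CommSemiring

section Domain

variable {R σ τ : Type*} [CommRing R] [IsDomain R]

lemma IsHomogeneous.linearPart_ne_zero [Infinite R] [Fintype σ] {l : MvPolynomial σ R}
    (hl : l.IsHomogeneous 1) (hl0 : l ≠ 0) : linearPart l ≠ 0 := by
  refine fun h => hl0 (MvPolynomial.funext fun a => ?_)
  rw [← hl.linearPart_apply, h, LinearMap.zero_apply, map_zero]

lemma eq_zero_of_rename_eq_add_mul_X_add_mul_X_sq [CharZero R] {g : σ → τ}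
    (hg : Function.Injective g) {j : τ} (hj : j ∉ Set.range g) {p a b c : MvPolynomial σ R}
    (h : rename g p = rename g a + rename g b * X j + rename g c * X j ^ 2) :
    b = 0 ∧ c = 0 := by
  have h1 : rename g b + 2 • (rename g c * X j) = 0 := by
    have := congrArg (pderiv j) h
    simp only [map_add, pderiv_mul, pderiv_pow, pderiv_rename_of_notMem_range hj,
      pderiv_X_self] at this
    linear_combination -this
  have h2 : 2 • rename g c = 0 := by
    have := congrArg (pderiv j) h1
    simpa only [map_add, map_nsmul, pderiv_mul, pderiv_rename_of_notMem_range hj, pderiv_X_self,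
      mul_one, zero_mul, zero_add, map_zero] using this
  have hc : c = 0 := by
    rw [two_nsmul, ← two_mul, mul_eq_zero] at h2
    exact rename_injective g hg (h2.resolve_left two_ne_zero)
  refine ⟨rename_injective g hg ?_, hc⟩
  simpa [hc] using h1

end Domain

end MvPolynomial

section EckardtCubic

variable {R : Type*} [CommRing R] {n : ℕ} {f l : MvPolynomial (Fin n) R}

noncomputable def eckardtCubic (f l : MvPolynomial (Fin n) R) : MvPolynomial (Fin (n + 1)) R :=
  rename Fin.castSucc f + rename Fin.castSucc l * X (Fin.last n) ^ 2

lemma last_notMem_range_castSucc :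
    Fin.last n ∉ Set.range (Fin.castSucc : Fin n → Fin (n + 1)) := by
  rintro ⟨i, hi⟩
  exact (Fin.castSucc_lt_last i).ne hi

lemma isHomogeneous_eckardtCubic (hf : f.IsHomogeneous 3) (hl : l.IsHomogeneous 1) :
    (eckardtCubic f l).IsHomogeneous 3 :=
  hf.rename_isHomogeneous.add (hl.rename_isHomogeneous.mul (isHomogeneous_X_pow _ 2))

lemma pderiv_castSucc_eckardtCubic (i : Fin n) :
    pderiv i.castSucc (eckardtCubic f l) =
      rename Fin.castSucc (pderiv i f) + rename Fin.castSucc (pderiv i l) * X (Fin.last n) ^ 2 := by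
  rw [eckardtCubic, map_add, pderiv_mul, pderiv_rename (Fin.castSucc_injective n),
    pderiv_rename (Fin.castSucc_injective n), pderiv_pow,
    pderiv_X_of_ne (Fin.castSucc_lt_last i).ne']
  ring

lemma pderiv_last_eckardtCubic :
    pderiv (Fin.last n) (eckardtCubic f l) = rename Fin.castSucc (2 • l) * X (Fin.last n) := by
  rw [eckardtCubic, map_add, pderiv_mul, pderiv_rename_of_notMem_range last_notMem_range_castSucc,
    pderiv_rename_of_notMem_range last_notMem_range_castSucc, pderiv_pow, pderiv_X_self, map_nsmul]
  ring

lemma sum_smul_pderiv_castSucc_eckardtCubic (hl : l.IsHomogeneous 1) (a : Fin n → R) :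
    ∑ i, a i • pderiv i.castSucc (eckardtCubic f l) =
      rename Fin.castSucc (∑ i, a i • pderiv i f) +
        rename Fin.castSucc (C (eval a l)) * X (Fin.last n) ^ 2 := by
  simp only [pderiv_castSucc_eckardtCubic, smul_add, Finset.sum_add_distrib,
    ← hl.sum_smul_pderiv_of_one, map_sum, map_smul, Finset.sum_mul, smul_mul_assoc]

lemma eq_zero_of_sum_smul_pderiv_eckardtCubic_mem_range_rename [IsDomain R]
    [CharZero R] (hl : l.IsHomogeneous 1) (hl0 : l ≠ 0) {c : Fin (n + 1) → R}
    (h : ∑ i, c i • pderiv i (eckardtCubic f l) ∈ Set.range (rename (R := R) Fin.castSucc)) :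
    eval (c ∘ Fin.castSucc) l = 0 ∧ c (Fin.last n) = 0 := by
  obtain ⟨q, hq⟩ := h
  rw [Fin.sum_univ_castSucc, sum_smul_pderiv_castSucc_eckardtCubic hl, pderiv_last_eckardtCubic,
    ← smul_mul_assoc, ← map_smul, add_right_comm] at hq
  obtain ⟨hlast, heval⟩ := eq_zero_of_rename_eq_add_mul_X_add_mul_X_sq
    (Fin.castSucc_injective n) last_notMem_range_castSucc hq
  refine ⟨C_eq_zero.mp heval, ?_⟩
  simpa [hl0] using hlast

lemma restrictScalars_jacobianIdeal_eckardtCubic_inf_eq_map_ker [IsDomain R] [CharZero R]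
    (hf : f.IsHomogeneous 3) (hl : l.IsHomogeneous 1) (hl0 : l ≠ 0) :
    ((jacobianIdeal (eckardtCubic f l)).restrictScalars R ⊓ homogeneousSubmodule _ R 2) ⊓
        LinearMap.range (rename (R := R) (Fin.castSucc : Fin n → Fin (n + 1))).toLinearMap =
      (LinearMap.ker (linearPart l)).map
        (Fintype.linearCombination R fun i : Fin n => pderiv i.castSucc (eckardtCubic f l)) := by
  have hquadric : ∀ i, (pderiv i (eckardtCubic f l)).IsHomogeneous 2 :=
    fun i => (isHomogeneous_eckardtCubic hf hl).pderiv
  ext P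
  simp only [Submodule.mem_inf, Submodule.restrictScalars_mem, mem_homogeneousSubmodule,
    LinearMap.mem_range, AlgHom.toLinearMap_apply, Submodule.mem_map, LinearMap.mem_ker,
    hl.linearPart_apply, Fintype.linearCombination_apply]
  constructor
  · rintro ⟨⟨hJ, hP⟩, hrange⟩
    obtain ⟨c, rfl⟩ := (Submodule.mem_span_range_iff_exists_fun R).mp
      (mem_span_of_mem_ideal_span_of_isHomogeneous hquadric hJ hP)
    obtain ⟨heval, hlast⟩ :=
      eq_zero_of_sum_smul_pderiv_eckardtCubic_mem_range_rename hl hl0 hrange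
    exact ⟨c ∘ Fin.castSucc, heval, by simp [Fin.sum_univ_castSucc, hlast]⟩
  · rintro ⟨a, ha, rfl⟩
    refine ⟨⟨Submodule.sum_mem _ fun i _ => Submodule.smul_of_tower_mem _ _ ?_,
      IsHomogeneous.sum _ _ _ fun i _ => ?_⟩, ∑ i, a i • pderiv i f, ?_⟩
    · exact Ideal.subset_span ⟨i.castSucc, rfl⟩
    · rw [smul_eq_C_mul]
      exact (hquadric _).C_mul _
    · simp [sum_smul_pderiv_castSucc_eckardtCubic hl, ha]

end EckardtCubic

/-- Let `F = f(x₀,…,x₃) + l(x₀,…,x₃)x₄²` define a smooth cubic threefold,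
with Jacobian ideal `J_F = (∂F/∂x₀,…,∂F/∂x₄)`.  The space of quadrics in `J_F²` not
involving `x₄`, i.e. `J_F² ∩ Sym²⟨x₀,…,x₃⟩`, equals the set of quadrics
`Σ_{i=0}^{3} aᵢ·∂F/∂xᵢ = Σ aᵢ(∂f/∂xᵢ + (∂l/∂xᵢ)x₄²)` with `l(a₀,…,a₃) = 0`; in
particular it has dimension 3 when the partials of `F` are linearly independent. -/
theorem stmt5
    (f l : MvPolynomial (Fin 4) ℂ)
    (hf : f.IsHomogeneous 3) (hl : l.IsHomogeneous 1) (hl0 : l ≠ 0)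
    (F : MvPolynomial (Fin 5) ℂ)
    (hF : F = rename Fin.castSucc f + rename Fin.castSucc l * X 4 ^ 2)
    (J : Ideal (MvPolynomial (Fin 5) ℂ))
    (hJ : J = Ideal.span (Set.range fun i => pderiv i F))
    (hind : LinearIndependent ℂ fun i : Fin 5 => pderiv i F)
    (S : Submodule ℂ (MvPolynomial (Fin 5) ℂ))
    -- S = J_F² ∩ Sym²⟨x₀,…,x₃⟩ : degree-2 elements of J_F involving only x₀,…,x₃
    (hS : S = (J.restrictScalars ℂ ⊓ homogeneousSubmodule (Fin 5) ℂ 2) ⊓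
      LinearMap.range (rename (R := ℂ) (Fin.castSucc : Fin 4 → Fin 5)).toLinearMap) :
    (S : Set (MvPolynomial (Fin 5) ℂ))
      = {P | ∃ a : Fin 4 → ℂ, eval a l = 0 ∧ P = ∑ i : Fin 4, a i • pderiv i.castSucc F} ∧
    Module.finrank ℂ S = 3 := by
  replace hF : F = eckardtCubic f l := hF
  subst hF hJ
  set L := Fintype.linearCombination ℂ fun i : Fin 4 => pderiv i.castSucc (eckardtCubic f l)
  replace hS : S = (LinearMap.ker (linearPart l)).map L :=
    hS.trans (restrictScalars_jacobianIdeal_eckardtCubic_inf_eq_map_ker hf hl hl0)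
  have hinj : Function.Injective L := linearIndependent_iff_injective_fintypeLinearCombination.mp
    (hind.comp _ (Fin.castSucc_injective 4))
  constructor
  · ext P
    simp only [hS, Submodule.map_coe, Set.mem_image, SetLike.mem_coe, LinearMap.mem_ker,
      hl.linearPart_apply, L, Fintype.linearCombination_apply, Set.mem_ofPred_eq, eq_comm]
  · have hker := Module.Dual.finrank_ker_add_one_of_ne_zero (hl.linearPart_ne_zero hl0)
    rw [Module.finrank_fin_fun] at hker
    rw [hS, ← (Submodule.equivMapOfInjective _ hinj _).finrank_eq]
    omega
end
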